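/- arXiv:2509.19225 — 8 statements merged into one kernel-verified Lean document; each statement's English description precedes it below -/
import Mathlib

section
/- The Chebyshev expansion coefficients of the Zernike polynomials satisfy the sum rule Σ'_{i=0, n-i even}^{n} c_{n,m,i} = 1, where the prime means the i=0 term is halved; here c_{n,m,i} is given explicitly by c_{n,m,i} = (-1)^{(n-m)/2} Σ_{s=max(0,(i-m)/2)}^{(n-m)/2} (-1)^s C((n+m)/2+s, (n-m)/2-s) C(m+2s,s) 2^{1-m-2s} C(m+2s, (m+2s-i)/2). -/
/-
Write `n = m + 2k` and exchange the sums over `i` and `s`. For fixed `s` and `M = m + 2s`, the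
inner sum is the primed sum `Σ' C(M, (M - i)/2) = 2^(M-1)`: pairing `j` with `M - j` in
`Σ_j C(M, j) = 2^M` counts each `i = M - 2j > 0` twice and `i = 0` once. This cancels the factor
`2^(1-M)`, leaving `Σ_s (-1)^(k+s) C(m+k+s, k-s) C(m+2s, s) = Σ_s (-1)^(k-s) C(k, s) C(m+k+s, k)`,
the `k`-th forward difference of `x ↦ C(x + m + k, k)`, which is `1`.
-/

noncomputable def c (n m i : ℕ) : ℝ :=
  (-1 : ℝ) ^ ((n - m) / 2) *
    ∑ s ∈ Finset.Icc ((i - m) / 2) ((n - m) / 2),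
      (-1 : ℝ) ^ s * (((n + m) / 2 + s).choose ((n - m) / 2 - s) : ℝ) *
        ((m + 2 * s).choose s : ℝ) * (2 : ℝ) ^ ((1 : ℤ) - m - 2 * s) *
        ((m + 2 * s).choose ((m + 2 * s - i) / 2) : ℝ)

open Finset

lemma alternating_sum_choose_mul_choose_add (k y : ℕ) :
    ∑ s ∈ range (k + 1), (-1 : ℤ) ^ (k - s) * k.choose s * (y + s).choose k = 1 := by
  have hΔ := fwdDiff_iter_choose 0 k
  rw [add_zero] at hΔ
  have h := fwdDiff_iter_eq_sum_shift (1 : ℕ) (fun x ↦ (x.choose k : ℤ)) k y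
  rw [hΔ] at h
  simpa using h.symm

lemma choose_mul_choose_eq_choose_mul_choose (a k s : ℕ) (hs : s ≤ k) :
    (a + k + s).choose (k - s) * (a + 2 * s).choose s = k.choose s * (a + k + s).choose k := by
  rw [Nat.choose_symm_of_eq_add (by omega : a + k + s = (k - s) + (a + 2 * s)),
    Nat.choose_mul (by omega), mul_comm (k.choose s), Nat.choose_mul hs]
  congr 1
  exact Nat.choose_symm_of_eq_add (by omega)

lemma sum_neg_one_pow_mul_choose_mul_choose (a k : ℕ) :
    ∑ s ∈ range (k + 1),
      (-1 : ℝ) ^ (k + s) * ((a + k + s).choose (k - s) : ℝ) * ((a + 2 * s).choose s : ℝ) = 1 := by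
  have h := alternating_sum_choose_mul_choose_add k (a + k)
  rw [← Int.cast_inj (α := ℝ)] at h
  push_cast at h
  refine Eq.trans (sum_congr rfl fun s hs ↦ ?_) h
  have hs : s ≤ k := Nat.lt_succ_iff.mp (mem_range.mp hs)
  rw [show k + s = (k - s) + 2 * s by omega, pow_add, pow_mul, neg_one_sq, one_pow, mul_one,
    mul_assoc, ← Nat.cast_mul, choose_mul_choose_eq_choose_mul_choose a k s hs]
  push_cast
  ring

lemma two_mul_sum_mul_choose_of_add_reflect_eq_one {R : Type*} [CommSemiring R] (M : ℕ)
    (w : ℕ → R) (hw : ∀ j ≤ M, w j + w (M - j) = 1) :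
    2 * ∑ j ∈ range (M + 1), w j * M.choose j = 2 ^ M := by
  have hreflect : ∑ j ∈ range (M + 1), w j * M.choose j
      = ∑ j ∈ range (M + 1), w (M - j) * M.choose j := by
    rw [← sum_range_reflect]
    refine sum_congr rfl fun j hj ↦ ?_
    rw [add_tsub_cancel_right, Nat.choose_symm (by simpa [Nat.lt_succ_iff] using hj)]
  have hbinom : ∑ j ∈ range (M + 1), (M.choose j : R) = 2 ^ M := by
    rw [← Nat.cast_sum, Nat.sum_range_choose, Nat.cast_pow, Nat.cast_ofNat]
  rw [two_mul]
  nth_rw 2 [hreflect]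
  rw [← sum_add_distrib, ← hbinom]
  refine sum_congr rfl fun j hj ↦ ?_
  rw [← add_mul, hw j (Nat.lt_succ_iff.mp (mem_range.mp hj)), one_mul]

lemma sum_filter_primed_mul_choose (M : ℕ) :
    ∑ i ∈ range (M + 1) with (M - i) % 2 = 0,
      (if i = 0 then (1 : ℝ) / 2 else 1) * (M.choose ((M - i) / 2) : ℝ) = 2 ^ M / 2 := by
  set w : ℕ → ℝ := fun j ↦ if 2 * j < M then 1 else if 2 * j = M then 1 / 2 else 0 with hw_def
  have hw : ∀ j ≤ M, w j + w (M - j) = 1 := by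
    intro j hj
    simp only [hw_def]
    split_ifs <;> first | omega | norm_num
  have hreindex : ∑ i ∈ range (M + 1) with (M - i) % 2 = 0,
      (if i = 0 then (1 : ℝ) / 2 else 1) * (M.choose ((M - i) / 2) : ℝ)
      = ∑ j ∈ range (M + 1), w j * M.choose j := by
    refine (sum_nbij' (t := (range (M + 1)).filter (2 * · ≤ M)) (fun i ↦ (M - i) / 2)
      (fun j ↦ M - 2 * j) ?_ ?_ ?_ ?_ ?_).trans (sum_filter_of_ne fun j _ hj ↦ ?_)
    all_goals simp only [mem_filter, mem_range, hw_def] at *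
    · omega
    · omega
    · omega
    · omega
    · intro i hi
      congr 1
      split_ifs <;> first | rfl | omega
    · by_contra h
      simp [show ¬ 2 * j < M by omega, show 2 * j ≠ M by omega] at hj
  rw [hreindex, eq_div_iff two_ne_zero, mul_comm,
    two_mul_sum_mul_choose_of_add_reflect_eq_one M w hw]

lemma c_add_two_mul (m k i : ℕ) :
    c (m + 2 * k) m i = ∑ s ∈ Icc ((i - m) / 2) k,
      (-1 : ℝ) ^ (k + s) * ((m + k + s).choose (k - s) : ℝ) * ((m + 2 * s).choose s : ℝ) *
        (2 : ℝ) ^ ((1 : ℤ) - m - 2 * s) * ((m + 2 * s).choose ((m + 2 * s - i) / 2) : ℝ) := by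
  rw [c, show (m + 2 * k - m) / 2 = k by omega, show (m + 2 * k + m) / 2 = m + k by omega, mul_sum]
  simp only [pow_add, mul_assoc]

/-- Sum rule: Σ'_{i=0, n-i even}^{n} c_{n,m,i} = 1, the prime halving the i = 0 term. -/
theorem coeff_sum_rule (n m : ℕ) (hmn : m ≤ n) (hpar : Even (n - m)) :
    (∑ i ∈ Finset.range (n + 1),
      if (n - i) % 2 = 0 then (if i = 0 then (1 : ℝ) / 2 else 1) * c n m i else 0) = 1 := by
  obtain ⟨k, rfl⟩ : ∃ k, n = m + 2 * k := by
    obtain ⟨r, hr⟩ := hpar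
    exact ⟨r, by omega⟩
  rw [← sum_filter]
  refine Eq.trans ?_ (sum_neg_one_pow_mul_choose_mul_choose m k)
  simp_rw [c_add_two_mul, mul_sum]
  rw [sum_comm' (t' := range (k + 1)) (s' := fun s ↦ (range (m + 2 * s + 1)).filter
    fun i ↦ (m + 2 * s - i) % 2 = 0) (by intro i s; simp only [mem_filter, mem_range, mem_Icc]; omega)]
  refine sum_congr rfl fun s _ ↦ ?_
  have hpow : (2 : ℝ) ^ ((1 : ℤ) - m - 2 * s) * (2 ^ (m + 2 * s) / 2) = 1 := by
    rw [← zpow_natCast, div_eq_mul_inv, ← zpow_neg_one, ← zpow_add₀ two_ne_zero,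
      ← zpow_add₀ two_ne_zero]
    push_cast
    ring_nf
    exact zpow_zero 2
  set A := (-1 : ℝ) ^ (k + s) * ((m + k + s).choose (k - s) : ℝ) * ((m + 2 * s).choose s : ℝ)
  calc _ = A * 2 ^ ((1 : ℤ) - m - 2 * s) * ∑ i ∈ range (m + 2 * s + 1) with (m + 2 * s - i) % 2 = 0,
          (if i = 0 then (1 : ℝ) / 2 else 1) * ((m + 2 * s).choose ((m + 2 * s - i) / 2) : ℝ) := by
        rw [mul_sum]
        exact sum_congr rfl fun i _ ↦ by ring
    _ = A := by rw [sum_filter_primed_mul_choose, mul_assoc, hpow, mul_one]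
end

section
/- For integers n ≥ m ≥ 0 with n-m even, R_n^m(x) = Σ'_{i=0, n-i even}^{n} c_{n,m,i} T_i(x), where c_{n,m,i} = (-1)^{(n-m)/2} Σ_{s=max(0,(i-m)/2)}^{(n-m)/2} (-1)^s C((n+m)/2+s, (n-m)/2-s) C(m+2s,s) 2^{1-m-2s} C(m+2s, (m+2s-i)/2), and the prime halves the i=0 term. -/
noncomputable def T (i : ℕ) (x : ℝ) : ℝ := (Polynomial.Chebyshev.T ℝ i).eval x

noncomputable def R (n m : ℕ) (x : ℝ) : ℝ :=
  (-1 : ℝ) ^ ((n - m) / 2) * x ^ m *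
    ∑ s ∈ Finset.range ((n - m) / 2 + 1),
      (((n + m) / 2 + s).choose ((n - m) / 2 - s) : ℝ) * ((m + 2 * s).choose s : ℝ) *
        (-x ^ 2) ^ s

/-!
Substituting `x = (z + z⁻¹) / 2` turns `(2x) ^ k` into `(z + z⁻¹) ^ k`, whose binomial expansion
pairs `z ^ (k - 2t)` with `z ^ (2t - k)`; algebraically, the recurrence `2X T_j = T_{j+1} + T_{j-1}`
gives `(2X) ^ k = ∑_t C(k, t) T_{k-2t}`, which folds by `T_{-j} = T_j` into the Chebyshev expansion
`x ^ k = 2 ^ (1 - k) ∑'_{i ≡ k (2)} C(k, (k - i) / 2) T_i`. Expanding `R_n^m` in the monomials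
`x ^ (m + 2s)` and exchanging the two sums gives the coefficients `c`.
-/

open Finset Polynomial

namespace Polynomial.Chebyshev

variable (R : Type*) [CommRing R]

theorem two_mul_X_pow_eq_sum_antidiagonal (k : ℕ) :
    (2 * X : R[X]) ^ k = ∑ ij ∈ antidiagonal k, (k.choose ij.1 : R[X]) * T R (ij.1 - ij.2 : ℤ) := by
  induction k with
  | zero => simp
  | succ k ih =>
    rw [sum_antidiagonal_choose_succ_mul (fun i j => T R ((i : ℤ) - j)), pow_succ, ih, sum_mul,
      ← sum_add_distrib]
    refine sum_congr rfl fun ij hij => ?_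
    rw [← Nat.choose_symm_of_eq_add (mem_antidiagonal.mp hij).symm]
    push_cast
    rw [show (ij.1 : ℤ) + 1 - ij.2 = ij.1 - ij.2 + 1 by ring, T_add_one,
      show (ij.1 : ℤ) - (ij.2 + 1) = ij.1 - ij.2 - 1 by ring]
    ring

theorem sum_antidiagonal_choose_mul_T_eq_sum_range {k n : ℕ} (hkn : k ≤ n) :
    ∑ ij ∈ antidiagonal k, (k.choose ij.1 : R[X]) * T R (ij.1 - ij.2 : ℤ) =
      ∑ l ∈ range (n + 1), if l ≤ k ∧ (k - l) % 2 = 0 then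
        ((if l = 0 then 1 else 2) * k.choose ((k - l) / 2) : R[X]) * T R l else 0 := by
  rw [← sum_fiberwise_of_maps_to (g := fun ij : ℕ × ℕ => ((ij.1 : ℤ) - ij.2).natAbs)
    (t := range (n + 1)) fun ij hij => by
      simp only [HasAntidiagonal.mem_antidiagonal, mem_range] at *; omega]
  refine sum_congr rfl fun l _ => ?_
  have hT : ∀ ij ∈ {ij ∈ antidiagonal k | ((ij.1 : ℤ) - ij.2).natAbs = l},
      (k.choose ij.1 : R[X]) * T R (ij.1 - ij.2 : ℤ) = k.choose ij.1 * T R l :=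
    fun ij hij => by rw [← T_natAbs, (mem_filter.mp hij).2]
  rw [sum_congr rfl hT, ← sum_mul]
  split_ifs with hlk hl0
  · have hfiber : {ij ∈ antidiagonal k | ((ij.1 : ℤ) - ij.2).natAbs = l} = {(k / 2, k / 2)} := by
      ext ⟨i, j⟩
      simp only [mem_filter, HasAntidiagonal.mem_antidiagonal, mem_singleton, Prod.mk.injEq]
      omega
    rw [hfiber]
    simp [hl0]
  · have hfiber : {ij ∈ antidiagonal k | ((ij.1 : ℤ) - ij.2).natAbs = l} =
        {((k + l) / 2, (k - l) / 2), ((k - l) / 2, (k + l) / 2)} := by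
      ext ⟨i, j⟩
      simp only [mem_filter, HasAntidiagonal.mem_antidiagonal, mem_insert, mem_singleton,
        Prod.mk.injEq]
      omega
    rw [hfiber, sum_pair (by simp only [ne_eq, Prod.mk.injEq]; omega),
      Nat.choose_symm_of_eq_add (show k = (k + l) / 2 + (k - l) / 2 by omega)]
    ring
  · rw [filter_false_of_mem fun ij hij => by
      simp only [HasAntidiagonal.mem_antidiagonal] at hij; omega]
    simp

end Polynomial.Chebyshev

/-- For `i = 0` this is twice the coefficient of `T 0` in `x ^ k`; the guard `i ≤ k` is needed
because `(k - i) / 2` truncates. -/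
noncomputable def powCoeffT (k i : ℕ) : ℝ :=
  if i ≤ k then (2 : ℝ) ^ ((1 : ℤ) - k) * k.choose ((k - i) / 2) else 0

theorem pow_eq_sum_powCoeffT_mul_T {k n : ℕ} (hkn : k ≤ n) (hpar : (n - k) % 2 = 0) (x : ℝ) :
    x ^ k = ∑ i ∈ range (n + 1),
      if (n - i) % 2 = 0 then (if i = 0 then (1 : ℝ) / 2 else 1) * powCoeffT k i * T i x
      else 0 := by
  have hbinom := congrArg (eval x) (Chebyshev.two_mul_X_pow_eq_sum_antidiagonal ℝ k)
  rw [Chebyshev.sum_antidiagonal_choose_mul_T_eq_sum_range ℝ hkn] at hbinom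
  simp only [eval_pow, eval_mul, eval_ofNat, eval_X, eval_finsetSum] at hbinom
  have htwo : (2 : ℝ) ^ ((1 : ℤ) - k) = 2 * ((2 : ℝ) ^ k)⁻¹ := by
    rw [zpow_sub₀ two_ne_zero, zpow_one, zpow_natCast, div_eq_mul_inv]
  calc x ^ k = ((2 : ℝ) ^ k)⁻¹ * (2 * x) ^ k := by
        rw [mul_pow, inv_mul_cancel_left₀ (by positivity)]
    _ = _ := by
      rw [hbinom, mul_sum]
      refine sum_congr rfl fun i _ => ?_
      rcases le_or_gt i k with hik | hki
      · have hiff : (k - i) % 2 = 0 ↔ (n - i) % 2 = 0 := by omega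
        simp only [powCoeffT, hik, true_and, hiff, if_true, T, htwo]
        split_ifs <;>
          simp only [eval_mul, eval_natCast, eval_ofNat, eval_one, eval_zero, mul_zero] <;> ring
      · simp [powCoeffT, hki.not_ge]

noncomputable def zernikeCoeff (m h s : ℕ) : ℝ :=
  (-1) ^ (h + s) * ((m + h + s).choose (h - s) : ℝ) * ((m + 2 * s).choose s : ℝ)

theorem R_eq_sum_zernikeCoeff_mul_pow (m h : ℕ) (x : ℝ) :
    R (m + 2 * h) m x = ∑ s ∈ range (h + 1), zernikeCoeff m h s * x ^ (m + 2 * s) := by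
  simp only [R, zernikeCoeff, show (m + 2 * h - m) / 2 = h by omega,
    show (m + 2 * h + m) / 2 = m + h by omega, mul_sum]
  refine sum_congr rfl fun s _ => ?_
  ring

theorem c_eq_sum_zernikeCoeff_mul_powCoeffT {m h i : ℕ} (hi : i ≤ m + 2 * h)
    (hpar : (m + 2 * h - i) % 2 = 0) :
    c (m + 2 * h) m i = ∑ s ∈ range (h + 1), zernikeCoeff m h s * powCoeffT (m + 2 * s) i := by
  have hIcc : Icc ((i - m) / 2) h = {s ∈ range (h + 1) | i ≤ m + 2 * s} := by
    ext s
    simp only [mem_Icc, mem_filter, mem_range]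
    omega
  simp only [c, show (m + 2 * h - m) / 2 = h by omega, show (m + 2 * h + m) / 2 = m + h by omega,
    hIcc, sum_filter, mul_sum]
  refine sum_congr rfl fun s _ => ?_
  simp only [powCoeffT, zernikeCoeff]
  split_ifs
  · push_cast
    rw [sub_add_eq_sub_sub, pow_add]
    ring
  · simp

/-- Chebyshev expansion of the radial Zernike polynomial:
R_n^m(x) = Σ'_{i=0, n-i even}^{n} c_{n,m,i} T_i(x), the prime halving the i = 0 term. -/
theorem zernike_chebyshev_expansion (n m : ℕ) (hmn : m ≤ n) (hpar : Even (n - m)) (x : ℝ) :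
    R n m x = ∑ i ∈ Finset.range (n + 1),
      if (n - i) % 2 = 0 then
        (if i = 0 then (1 : ℝ) / 2 else 1) * c n m i * T i x
      else 0 := by
  obtain ⟨h, rfl⟩ : ∃ h, n = m + 2 * h := by
    obtain ⟨j, hj⟩ := hpar
    exact ⟨j, by omega⟩
  rw [R_eq_sum_zernikeCoeff_mul_pow]
  calc ∑ s ∈ range (h + 1), zernikeCoeff m h s * x ^ (m + 2 * s)
      = ∑ s ∈ range (h + 1), ∑ i ∈ range (m + 2 * h + 1), zernikeCoeff m h s *
          if (m + 2 * h - i) % 2 = 0 then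
            (if i = 0 then (1 : ℝ) / 2 else 1) * powCoeffT (m + 2 * s) i * T i x
          else 0 := by
        refine sum_congr rfl fun s hs => ?_
        rw [pow_eq_sum_powCoeffT_mul_T (n := m + 2 * h) (by rw [mem_range] at hs; omega) (by omega), mul_sum]
    _ = _ := by
        rw [sum_comm]
        refine sum_congr rfl fun i hi => ?_
        by_cases hpar : (m + 2 * h - i) % 2 = 0
        · rw [c_eq_sum_zernikeCoeff_mul_powCoeffT (Nat.lt_succ_iff.mp (mem_range.mp hi)) hpar]
          simp only [hpar, if_true, mul_sum, sum_mul]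
          exact sum_congr rfl fun s _ => by ring
        · simp [hpar]
end

section
/- Inverse expansion of monomials in Zernike polynomials: for integers j ≥ m ≥ 0 with j-m even, x^j = Σ_{n=m, n≡m (mod 2)}^{j} h_{j,n,m} R_n^m(x), where h_{j,n,m} = (n+1)/(1+(j+n)/2) * C((j-m)/2, (n-m)/2) / C((j+n)/2, (n-m)/2). -/
noncomputable def h (j n m : ℕ) : ℝ :=
  ((n : ℝ) + 1) / (1 + ((j + n) / 2 : ℕ)) * (((j - m) / 2).choose ((n - m) / 2) : ℝ) /
    ((((j + n) / 2).choose ((n - m) / 2) : ℝ))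

/-!
Write `j = m + 2p` and `n = m + 2k`. Expanding every `R_{m+2k}^m` and collecting the powers
`x^(m+2s)`, it suffices that for `s ≤ p`
`∑_{k=s}^{p} h_{j,m+2k,m} (-1)^(k+s) C(m+k+s, k-s) C(m+2s, s)`
is `1` if `s = p` and `0` otherwise. Up to the factor `p! (m+p)! / (s! (m+s)! (p-s)!)`, the term with
`k = s + i` is `(-1)^i T_i`, where `T_i = (c+2i+1) C(q,i) (c+i)! / (c+q+i+1)!`, `c = m + 2s`,
`q = p - s`. With `G_i = i C(q,i) (c+i)! / (c+q+i)!` one has `G_i + G_{i+1} = q T_i`, so for `q ≥ 1`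
the alternating sum of the `T_i` telescopes to `G_0 ± G_{q+1} = 0`; for `q = 0` the single term
is `1`.
-/

open Nat Finset

lemma Finset.sum_range_add_two_mul_ite {M : Type*} [AddCommMonoid M] (f : ℕ → M) (m p : ℕ) :
    ∑ n ∈ range (m + 2 * p + 1), (if m ≤ n ∧ Even (n - m) then f n else 0) =
      ∑ k ∈ range (p + 1), f (m + 2 * k) := by
  rw [← sum_filter]
  refine sum_nbij' (fun n => (n - m) / 2) (fun k => m + 2 * k) ?_ ?_ ?_ ?_ ?_ <;>
    intro n hn <;> simp only [mem_filter, mem_range, Nat.even_iff] at hn ⊢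
  case refine_5 => exact congrArg f (by omega)
  all_goals omega

namespace Zernike

noncomputable def dualWeight (c q i : ℕ) : ℝ :=
  (c + 2 * i + 1) * q.choose i * (c + i)! / (c + q + i + 1)!

noncomputable def dualWeightPrimitive (c q i : ℕ) : ℝ :=
  i * q.choose i * (c + i)! / (c + q + i)!

lemma cast_choose_succ_mul (q i : ℕ) :
    (q.choose (i + 1) : ℝ) * (i + 1) = q.choose i * (q - i) := by
  rcases le_or_gt i q with hi | hi
  · have := congrArg (Nat.cast (R := ℝ)) (choose_succ_right_eq q i)
    push_cast [Nat.cast_sub hi] at this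
    exact this
  · simp [choose_eq_zero_of_lt hi, choose_eq_zero_of_lt (hi.trans (lt_add_one i))]

lemma dualWeightPrimitive_add_succ (c q i : ℕ) :
    dualWeightPrimitive c q i + dualWeightPrimitive c q (i + 1) = q * dualWeight c q i := by
  have hfac₁ : ((c + (i + 1))! : ℝ) = (c + i + 1) * (c + i)! := by
    rw [← add_assoc, factorial_succ]; push_cast; ring
  have hfac₂ : ((c + q + (i + 1))! : ℝ) = (c + q + i + 1) * (c + q + i)! := by
    rw [← add_assoc, factorial_succ]; push_cast; ring
  have hfac₃ : ((c + q + i + 1)! : ℝ) = (c + q + i + 1) * (c + q + i)! := by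
    rw [factorial_succ]; push_cast; ring
  have hne : ((c + q + i)! : ℝ) ≠ 0 := by positivity
  unfold dualWeightPrimitive dualWeight
  rw [hfac₁, hfac₂, hfac₃]
  field_simp
  push_cast
  linear_combination ((c : ℝ) + i + 1) * cast_choose_succ_mul q i

lemma sum_neg_one_pow_mul_dualWeight (c : ℕ) {q : ℕ} (hq : q ≠ 0) :
    ∑ i ∈ range (q + 1), (-1 : ℝ) ^ i * dualWeight c q i = 0 := by
  let G := dualWeightPrimitive c q
  have htel : ∑ i ∈ range (q + 1), (-1 : ℝ) ^ i * (G i + G (i + 1)) = 0 := by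
    have hdiff : ∀ i, (-1 : ℝ) ^ i * (G i + G (i + 1)) =
        (-1) ^ i * G i - (-1) ^ (i + 1) * G (i + 1) := fun i => by ring
    rw [sum_congr rfl fun i _ => hdiff i, sum_range_sub']
    simp [G, dualWeightPrimitive, choose_succ_self]
  simp only [G, dualWeightPrimitive_add_succ, mul_left_comm _ (q : ℝ), ← mul_sum] at htel
  exact (mul_eq_zero.1 htel).resolve_left (cast_ne_zero.2 hq)

lemma dualWeight_zero_zero (c : ℕ) : dualWeight c 0 0 = 1 := by
  have : ((c + 1)! : ℝ) ≠ 0 := by positivity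
  simp only [dualWeight, factorial_succ c, add_zero, choose_self]
  field_simp
  push_cast
  ring

noncomputable def coeff (m k s : ℕ) : ℝ :=
  (-1) ^ (k + s) * ((m + k + s).choose (k - s) : ℝ) * (m + 2 * s).choose s

lemma R_add_two_mul (m k : ℕ) (x : ℝ) :
    R (m + 2 * k) m x = ∑ s ∈ range (k + 1), coeff m k s * x ^ (m + 2 * s) := by
  rw [R, show (m + 2 * k - m) / 2 = k by omega, show (m + 2 * k + m) / 2 = m + k by omega,
    mul_sum]
  refine sum_congr rfl fun s _ => ?_
  rw [coeff, neg_pow]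
  ring

lemma h_add_two_mul (m p k : ℕ) :
    h (m + 2 * p) (m + 2 * k) m =
      (m + 2 * k + 1) / (m + p + k + 1) * p.choose k / (m + p + k).choose k := by
  rw [h, show (m + 2 * p + (m + 2 * k)) / 2 = m + p + k by omega,
    show (m + 2 * p - m) / 2 = p by omega, show (m + 2 * k - m) / 2 = k by omega]
  push_cast
  ring

lemma h_mul_coeff (m p s i : ℕ) (hsi : s + i ≤ p) :
    h (m + 2 * p) (m + 2 * (s + i)) m * coeff m (s + i) s =
      p ! * (m + p)! / (s ! * (m + s)! * (p - s)!) *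
        ((-1) ^ i * dualWeight (m + 2 * s) (p - s) i) := by
  set k := s + i with hk
  have hchoose₁ : (p.choose k : ℝ) = p ! / (k ! * (p - k)!) := cast_choose ℝ hsi
  have hchoose₂ : ((m + p + k).choose k : ℝ) = (m + p + k)! / (k ! * (m + p)!) := by
    rw [cast_choose ℝ (by omega), show m + p + k - k = m + p by omega]
  have hchoose₃ : ((m + k + s).choose (k - s) : ℝ) = (m + k + s)! / (i ! * (m + 2 * s)!) := by
    rw [cast_choose ℝ (by omega), show m + k + s - (k - s) = m + 2 * s by omega,
      show k - s = i by omega]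
  have hchoose₄ : ((m + 2 * s).choose s : ℝ) = (m + 2 * s)! / (s ! * (m + s)!) := by
    rw [cast_choose ℝ (by omega), show m + 2 * s - s = m + s by omega]
  have hchoose₅ : ((p - s).choose i : ℝ) = (p - s)! / (i ! * (p - k)!) := by
    rw [cast_choose ℝ (by omega), show p - s - i = p - k by omega]
  have hfac : ((m + 2 * s + (p - s) + i + 1)! : ℝ) = (m + p + k + 1) * (m + p + k)! := by
    rw [show m + 2 * s + (p - s) + i + 1 = m + p + k + 1 by omega, factorial_succ]
    push_cast
    ring
  have hsign : (-1 : ℝ) ^ (k + s) = (-1) ^ i := by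
    rw [show k + s = i + 2 * s by omega, pow_add, pow_mul]
    norm_num
  rw [h_add_two_mul, coeff, dualWeight, hchoose₁, hchoose₂, hchoose₃, hchoose₄, hchoose₅,
    hfac, hsign, show m + 2 * s + i = m + k + s by omega]
  field_simp
  rw [hk]
  push_cast
  ring

lemma sum_h_mul_coeff (m p s : ℕ) (hs : s ≤ p) :
    ∑ i ∈ range (p + 1 - s), h (m + 2 * p) (m + 2 * (s + i)) m * coeff m (s + i) s =
      if s = p then 1 else 0 := by
  rw [sum_congr rfl fun i hi => h_mul_coeff m p s i (by rw [mem_range] at hi; omega), ← mul_sum,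
    show p + 1 - s = p - s + 1 by omega]
  rcases hs.eq_or_lt with rfl | hlt
  · have : ((s ! : ℝ) * (m + s)!) ≠ 0 := by positivity
    simp [dualWeight_zero_zero, this]
  · rw [sum_neg_one_pow_mul_dualWeight _ (by omega), mul_zero, if_neg hlt.ne]

end Zernike

open Zernike in
/-- Inverse expansion of monomials in Zernike polynomials:
x^j = Σ_{n=m, n ≡ m (mod 2)}^{j} h_{j,n,m} R_n^m(x). -/
theorem monomial_zernike_expansion (j m : ℕ) (hmj : m ≤ j) (hpar : Even (j - m)) (x : ℝ) :
    x ^ j = ∑ n ∈ Finset.range (j + 1),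
      if m ≤ n ∧ Even (n - m) then h j n m * R n m x else 0 := by
  obtain ⟨p, rfl⟩ : ∃ p, j = m + 2 * p := by
    obtain ⟨p, hp⟩ := hpar
    exact ⟨p, by omega⟩
  rw [sum_range_add_two_mul_ite (fun n => h (m + 2 * p) n m * R n m x)]
  calc x ^ (m + 2 * p) = ∑ s ∈ range (p + 1), (if s = p then 1 else 0) * x ^ (m + 2 * s) := by
        simp
    _ = ∑ s ∈ range (p + 1), ∑ i ∈ range (p + 1 - s),
          h (m + 2 * p) (m + 2 * (s + i)) m * coeff m (s + i) s * x ^ (m + 2 * s) := by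
        refine sum_congr rfl fun s hs => ?_
        rw [← sum_mul, sum_h_mul_coeff m p s (mem_range_succ_iff.mp hs)]
    _ = ∑ k ∈ range (p + 1), ∑ s ∈ range (k + 1),
          h (m + 2 * p) (m + 2 * k) m * coeff m k s * x ^ (m + 2 * s) := by
        rw [← sum_range_diag_flip]
        refine sum_congr rfl fun k _ => sum_congr rfl fun s hs => ?_
        rw [add_tsub_cancel_of_le (mem_range_succ_iff.mp hs)]
    _ = ∑ k ∈ range (p + 1), h (m + 2 * p) (m + 2 * k) m * R (m + 2 * k) m x := by
        simp only [R_add_two_mul, mul_sum, mul_assoc]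
end

section
/- For n = m + 2 (i.e. ε = 1) and even m-i with 0 ≤ i ≤ m: c_{m+2,m,i} = 2^{1-m} C(m+1, 1) C(m, (m-i)/2) * i^2 / ((2+m+i)(2+m-i)). -/
/-- Closed form for ε = 1: c_{m+2,m,i} = 2^{1-m} C(m+1,1) C(m,(m-i)/2) i²/((2+m+i)(2+m-i)). -/
theorem coeff_eps_one (m i : ℕ) (him : i ≤ m) (hpar : Even (m - i)) :
    c (m + 2) m i = (2 : ℝ) ^ ((1 : ℤ) - m) * ((m + 1).choose 1 : ℝ) *
      (m.choose ((m - i) / 2) : ℝ) * (i : ℝ) ^ 2 /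
        (((2 : ℝ) + m + i) * ((2 : ℝ) + m - i)) := by
  obtain ⟨k, hk⟩ := hpar
  have hm : m = i + 2 * k := by omega
  subst hm
  -- key combinatorial identity
  have hnat : (i + 2*k + 2).choose (k+1) * ((k+1) * (i+k+1)) =
      (i + 2*k + 1) * ((i + 2*k + 2) * (i + 2*k).choose k) := by
    have h1 : (i + 2*k + 2) * ((i + 2*k + 1).choose k) =
        (i + 2*k + 2).choose (k+1) * (k+1) := by
      exact Nat.add_one_mul_choose_eq (i + 2*k + 1) k
    have h2 : (i + 2*k + 1).choose (k+1) * (k+1) =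
        (i + 2*k + 1).choose k * (i + 2*k + 1 - k) := Nat.choose_succ_right_eq _ _
    have h3 : (i + 2*k + 1) * ((i + 2*k).choose k) =
        (i + 2*k + 1).choose (k+1) * (k+1) := Nat.add_one_mul_choose_eq (i + 2*k) k
    have h4 : i + 2*k + 1 - k = i + k + 1 := by omega
    calc (i + 2*k + 2).choose (k+1) * ((k+1) * (i+k+1))
        = ((i + 2*k + 2).choose (k+1) * (k+1)) * (i+k+1) := by ring
      _ = (i + 2*k + 2) * ((i + 2*k + 1).choose k * (i + 2*k + 1 - k)) := by
          rw [← h1, h4]; ring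
      _ = (i + 2*k + 2) * ((i + 2*k + 1).choose (k+1) * (k+1)) := by rw [h2]
      _ = (i + 2*k + 2) * ((i + 2*k + 1) * ((i + 2*k).choose k)) := by rw [h3]
      _ = _ := by ring
  have hcast : ((i + 2*k + 2).choose (k+1) : ℝ) * (((k:ℝ)+1) * ((i:ℝ)+k+1)) =
      ((i:ℝ) + 2*k + 1) * (((i:ℝ) + 2*k + 2) * ((i + 2*k).choose k : ℝ)) := by
    exact_mod_cast congrArg (Nat.cast : ℕ → ℝ) hnat
  rw [c]
  rw [show (i - (i + 2*k)) / 2 = 0 by omega, show (i + 2*k + 2 - (i + 2*k)) / 2 = 1 by omega]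
  rw [show Finset.Icc 0 1 = {0, 1} by rfl]
  rw [Finset.sum_insert (by norm_num), Finset.sum_singleton]
  rw [show (i + 2*k + 2 + (i + 2*k)) / 2 = i + 2*k + 1 by omega]
  rw [show (i + 2*k + 2*0 - i) / 2 = k by omega,
      show (i + 2*k + 2*1 - i) / 2 = k + 1 by omega,
      show (i + 2*k - i) / 2 = k by omega,
      show (i + 2*k + 2*1) = i + 2*k + 2 by ring]
  simp only [pow_zero, pow_one, mul_zero, Nat.add_zero, Nat.sub_zero, Nat.choose_zero_right,
    Nat.choose_one_right, Nat.cast_one, one_mul, mul_one, Nat.cast_add, Nat.cast_mul,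
    Nat.cast_ofNat, Nat.sub_self, Nat.cast_zero]
  have e1 : ((1:ℤ) - ((i:ℤ) + 2*k) - 0) = 1 - ((i:ℤ) + 2*k) := by ring
  have e2 : (2:ℝ) ^ ((1:ℤ) - ((i:ℤ) + 2*k) - 2) = 2 ^ ((1:ℤ) - ((i:ℤ) + 2*k)) / 4 := by
    rw [zpow_sub₀ (by norm_num : (2:ℝ) ≠ 0)]; norm_num
  have hA : (2:ℝ) ^ ((1:ℤ) - ((i:ℤ) + 2*k)) ≠ 0 := zpow_ne_zero _ (by norm_num)
  have hk1 : ((k:ℝ) + 1) ≠ 0 := by positivity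
  have hik1 : ((i:ℝ) + k + 1) ≠ 0 := by positivity
  have hC2 : ((i + 2*k + 2).choose (k+1) : ℝ) =
      ((i:ℝ) + 2*k + 1) * (((i:ℝ) + 2*k + 2) * ((i + 2*k).choose k : ℝ)) /
        (((k:ℝ)+1) * ((i:ℝ)+k+1)) := by
    field_simp
    linarith [hcast]
  rw [hC2, e1, e2]
  set A : ℝ := (2:ℝ) ^ ((1:ℤ) - ((i:ℤ) + 2*k)) with hAdef
  have hden1 : (2:ℝ) + ((i:ℝ) + 2*k) + i ≠ 0 := by positivity
  have hden2 : (2:ℝ) + ((i:ℝ) + 2*k) - i ≠ 0 := by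
    have : (2:ℝ) + ((i:ℝ) + 2*k) - i = 2 + 2*k := by ring
    rw [this]; positivity
  field_simp
  ring
end

section
/- For n = m + 4 (ε = 2) and even m-i with 0 ≤ i ≤ m: c_{m+4,m,i} = 2^{1-m} C((m+(m+4))/2, 2) C(m, (m-i)/2) * (i^2 - m - 4)^2 / ((2+m+i)(2+m-i)(4+m+i)(4+m-i)). -/
set_option maxHeartbeats 2000000 in
/-- Closed form for ε = 2: c_{m+4,m,i} = 2^{1-m} C(m+2,2) C(m,(m-i)/2)
(i² - m - 4)² / ((2+m+i)(2+m-i)(4+m+i)(4+m-i)). -/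
theorem coeff_eps_two (m i : ℕ) (him : i ≤ m) (hpar : Even (m - i)) :
    c (m + 4) m i = (2 : ℝ) ^ ((1 : ℤ) - m) * ((m + 2).choose 2 : ℝ) *
      (m.choose ((m - i) / 2) : ℝ) * ((i : ℝ) ^ 2 - m - 4) ^ 2 /
        (((2 : ℝ) + m + i) * ((2 : ℝ) + m - i) * ((4 : ℝ) + m + i) * ((4 : ℝ) + m - i)) := by
  obtain ⟨k, hk⟩ := hpar
  have hm : m = i + 2 * k := by omega
  subst hm
  unfold c
  have h1 : (i + 2*k + 4 - (i + 2*k)) / 2 = 2 := by omega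
  have h0 : (i - (i + 2*k)) / 2 = 0 := by omega
  rw [h1, h0]
  rw [show (Finset.Icc 0 2 : Finset ℕ) = {0,1,2} from rfl]
  rw [Finset.sum_insert (by decide), Finset.sum_insert (by decide), Finset.sum_singleton]
  have e1 : (i + 2*k + 4 + (i + 2*k)) / 2 + 0 = i + 2*k + 2 := by omega
  have e2 : (i + 2*k + 4 + (i + 2*k)) / 2 + 1 = i + 2*k + 3 := by omega
  have e3 : (i + 2*k + 4 + (i + 2*k)) / 2 + 2 = i + 2*k + 4 := by omega
  have f1 : (i + 2*k + 2*0 - i)/2 = k := by omega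
  have f2 : (i + 2*k + 2*1 - i)/2 = k + 1 := by omega
  have f3 : (i + 2*k + 2*2 - i)/2 = k + 2 := by omega
  have g1 : i + 2*k + 2*0 = i + 2*k := by omega
  have g2 : i + 2*k + 2*1 = i + 2*k + 2 := by omega
  have g3 : i + 2*k + 2*2 = i + 2*k + 4 := by omega
  rw [e1, e2, e3, f1, f2, f3, g1, g2, g3]
  norm_num
  -- choose → factorials
  have hc1 : (((i+2*k+2).choose 2 : ℕ) : ℝ)
      = ((Nat.factorial (i+2*k+2)) : ℝ) / (2 * ((Nat.factorial (i+2*k)) : ℝ)) := by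
    rw [Nat.cast_choose ℝ (show 2 ≤ i+2*k+2 by omega),
      show i+2*k+2-2 = i+2*k from by omega]
    norm_num [Nat.factorial]
  have hc2 : (((i+2*k+2).choose (k+1) : ℕ) : ℝ)
      = ((Nat.factorial (i+2*k+2)) : ℝ) / (((Nat.factorial (k+1)) : ℝ) * ((Nat.factorial (i+k+1)) : ℝ)) := by
    rw [Nat.cast_choose ℝ (show k+1 ≤ i+2*k+2 by omega),
      show i+2*k+2-(k+1) = i+k+1 from by omega]
  have hc3 : (((i+2*k+4).choose 2 : ℕ) : ℝ)
      = ((Nat.factorial (i+2*k+4)) : ℝ) / (2 * ((Nat.factorial (i+2*k+2)) : ℝ)) := by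
    rw [Nat.cast_choose ℝ (show 2 ≤ i+2*k+4 by omega),
      show i+2*k+4-2 = i+2*k+2 from by omega]
    norm_num [Nat.factorial]
  have hc4 : (((i+2*k+4).choose (k+2) : ℕ) : ℝ)
      = ((Nat.factorial (i+2*k+4)) : ℝ) / (((Nat.factorial (k+2)) : ℝ) * ((Nat.factorial (i+k+2)) : ℝ)) := by
    rw [Nat.cast_choose ℝ (show k+2 ≤ i+2*k+4 by omega),
      show i+2*k+4-(k+2) = i+k+2 from by omega]
  have hc5 : (((i+2*k).choose k : ℕ) : ℝ)
      = ((Nat.factorial (i+2*k)) : ℝ) / (((Nat.factorial k) : ℝ) * ((Nat.factorial (i+k)) : ℝ)) := by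
    rw [Nat.cast_choose ℝ (show k ≤ i+2*k by omega),
      show i+2*k-k = i+k from by omega]
  rw [hc1, hc2, hc3, hc4, hc5]
  -- factorial expansions
  have hf1 : ((Nat.factorial (i+2*k+2)) : ℝ) = ((i:ℝ)+2*k+1)*((i:ℝ)+2*k+2)*((Nat.factorial (i+2*k)) : ℝ) := by
    rw [show i+2*k+2 = (i+2*k+1)+1 from rfl, Nat.factorial_succ,
      show i+2*k+1 = (i+2*k)+1 from rfl, Nat.factorial_succ]
    push_cast; ring
  have hf2 : ((Nat.factorial (i+2*k+4)) : ℝ)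
      = ((i:ℝ)+2*k+3)*((i:ℝ)+2*k+4)*((Nat.factorial (i+2*k+2)) : ℝ) := by
    rw [show i+2*k+4 = (i+2*k+3)+1 from rfl, Nat.factorial_succ,
      show i+2*k+3 = (i+2*k+2)+1 from rfl, Nat.factorial_succ]
    push_cast; ring
  have hf3 : ((Nat.factorial (k+1)) : ℝ) = ((k:ℝ)+1)*((Nat.factorial k) : ℝ) := by
    rw [Nat.factorial_succ]; push_cast; ring
  have hf4 : ((Nat.factorial (k+2)) : ℝ) = ((k:ℝ)+1)*((k:ℝ)+2)*((Nat.factorial k) : ℝ) := by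
    rw [show k+2 = (k+1)+1 from rfl, Nat.factorial_succ, Nat.factorial_succ]
    push_cast; ring
  have hf5 : ((Nat.factorial (i+k+1)) : ℝ) = ((i:ℝ)+k+1)*((Nat.factorial (i+k)) : ℝ) := by
    rw [Nat.factorial_succ]; push_cast; ring
  have hf6 : ((Nat.factorial (i+k+2)) : ℝ) = ((i:ℝ)+k+1)*((i:ℝ)+k+2)*((Nat.factorial (i+k)) : ℝ) := by
    rw [show i+k+2 = (i+k+1)+1 from rfl, Nat.factorial_succ, Nat.factorial_succ]
    push_cast; ring
  rw [hf2, hf1, hf3, hf4, hf5, hf6]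
  -- zpow
  have hz2 : (2:ℝ) ^ ((1:ℤ) - ((i:ℤ) + 2*(k:ℤ)) - 2)
      = (2:ℝ) ^ ((1:ℤ) - ((i:ℤ) + 2*(k:ℤ))) / 4 := by
    rw [zpow_sub₀ (two_ne_zero)]; norm_num
  have hz4 : (2:ℝ) ^ ((1:ℤ) - ((i:ℤ) + 2*(k:ℤ)) - 4)
      = (2:ℝ) ^ ((1:ℤ) - ((i:ℤ) + 2*(k:ℤ))) / 16 := by
    rw [zpow_sub₀ (two_ne_zero)]; norm_num
  rw [hz2, hz4]
  have hT : (2:ℝ) ^ ((1:ℤ) - ((i:ℤ) + 2*(k:ℤ))) ≠ 0 := zpow_ne_zero _ two_ne_zero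
  have hF1 : ((Nat.factorial (i+2*k)) : ℝ) ≠ 0 := by positivity
  have hF2 : ((Nat.factorial k) : ℝ) ≠ 0 := by positivity
  have hF3 : ((Nat.factorial (i+k)) : ℝ) ≠ 0 := by positivity
  have hd1 : ((2:ℝ) + ((i:ℝ) + 2*k) + i) ≠ 0 := by positivity
  have hd2 : ((2:ℝ) + ((i:ℝ) + 2*k) - i) ≠ 0 := by
    have : ((2:ℝ) + ((i:ℝ) + 2*k) - i) = 2 + 2*k := by ring
    rw [this]; positivity
  have hd3 : ((4:ℝ) + ((i:ℝ) + 2*k) + i) ≠ 0 := by positivity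
  have hd4 : ((4:ℝ) + ((i:ℝ) + 2*k) - i) ≠ 0 := by
    have : ((4:ℝ) + ((i:ℝ) + 2*k) - i) = 4 + 2*k := by ring
    rw [this]; positivity
  have hk1 : ((k:ℝ)+1) ≠ 0 := by positivity
  have hk2 : ((k:ℝ)+2) ≠ 0 := by positivity
  have hik1 : ((i:ℝ)+k+1) ≠ 0 := by positivity
  have hik2 : ((i:ℝ)+k+2) ≠ 0 := by positivity
  field_simp
  ring
end

section
/- For n = m + 6 (ε = 3) and even m-i with 0 ≤ i ≤ m: c_{m+6,m,i} = 2^{1-m} C(m+3, 3) C(m, (m-i)/2) * i^2 (i^2 - 3m - 16)^2 / Π_{d=1}^{3} (2d+m+i)(2d+m-i). -/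
set_option maxHeartbeats 1000000


lemma ch2 (n : ℕ) : ((n+2).choose 2 : ℝ) = (n+1)*(n+2)/2 := by
  induction n with
  | zero => norm_num
  | succ n ih =>
    have h : (n+1+2).choose 2 = (n+2).choose 1 + (n+2).choose 2 := Nat.choose_succ_succ (n+2) 1
    rw [h]
    push_cast [ih, Nat.choose_one_right]
    ring

lemma ch3 (n : ℕ) : ((n+3).choose 3 : ℝ) = (n+1)*(n+2)*(n+3)/6 := by
  induction n with
  | zero => norm_num
  | succ n ih =>
    have h : (n+1+3).choose 3 = (n+3).choose 2 + (n+3).choose 3 := Nat.choose_succ_succ (n+3) 2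
    rw [h, show n+3 = n+1+2 from rfl]
    push_cast [ih, ch2 (n+1)]
    ring

lemma step (i k : ℕ) :
    ((i+2*k+2).choose (k+1) : ℝ) * (((k:ℝ)+1) * ((i:ℝ)+k+1)) =
    ((i+2*k).choose k : ℝ) * (((i:ℝ)+2*k+1) * ((i:ℝ)+2*k+2)) := by
  have h1 := congrArg (Nat.cast : ℕ → ℝ) (Nat.add_one_mul_choose_eq (i+2*k) k)
  have h2 := congrArg (Nat.cast : ℕ → ℝ) (Nat.choose_mul_succ_eq (i+2*k+1) (k+1))
  rw [show (i+2*k+1+1 : ℕ) - (k+1) = i+k+1 from by omega,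
      show (i+2*k+1+1 : ℕ) = i+2*k+2 from rfl] at h2
  push_cast at h1 h2
  linear_combination (-((k:ℝ)+1)) * h2 + (-((i:ℝ)+2*k+2)) * h1


/-- Closed form for ε = 3: c_{m+6,m,i} = 2^{1-m} C(m+3,3) C(m,(m-i)/2)
i² (i² - 3m - 16)² / Π_{d=1}^{3} (2d+m+i)(2d+m-i). -/
theorem coeff_eps_three (m i : ℕ) (him : i ≤ m) (hpar : Even (m - i)) :
    c (m + 6) m i = (2 : ℝ) ^ ((1 : ℤ) - m) * ((m + 3).choose 3 : ℝ) *
      (m.choose ((m - i) / 2) : ℝ) * (i : ℝ) ^ 2 * ((i : ℝ) ^ 2 - 3 * m - 16) ^ 2 /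
        ∏ d ∈ Finset.Icc (1 : ℕ) 3, ((2 * (d : ℝ) + m + i) * (2 * (d : ℝ) + m - i)) := by
  obtain ⟨k, hk⟩ := hpar
  have hm : m = i + 2*k := by omega
  subst hm
  unfold c
  rw [show (i + 2*k + 6 - (i + 2*k)) / 2 = 3 from by omega,
      show (i - (i + 2*k)) / 2 = 0 from by omega,
      show (i + 2*k + 6 + (i + 2*k)) / 2 = i + 2*k + 3 from by omega,
      show (i + 2*k - i) / 2 = k from by omega]
  rw [Finset.sum_Icc_succ_top (by norm_num : (0:ℕ) ≤ 3),
      Finset.sum_Icc_succ_top (by norm_num : (0:ℕ) ≤ 2),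
      Finset.sum_Icc_succ_top (by norm_num : (0:ℕ) ≤ 1),
      Finset.Icc_self, Finset.sum_singleton]
  norm_num
  rw [show (i + 2*k + 6 - i) / 2 = k + 3 from by omega,
      show (i + 2*k + 4 - i) / 2 = k + 2 from by omega,
      show (i + 2*k + 2 - i) / 2 = k + 1 from by omega]
  have hprod : (∏ d ∈ Finset.Icc (1:ℕ) 3,
        ((2*(d:ℝ) + ((i:ℝ)+2*(k:ℝ)) + (i:ℝ)) * (2*(d:ℝ) + ((i:ℝ)+2*(k:ℝ)) - (i:ℝ))))
      = 64*(((k:ℝ)+1)*(((k:ℝ))+2)*((k:ℝ)+3)*((i:ℝ)+k+1)*((i:ℝ)+k+2)*((i:ℝ)+k+3)) := by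
    rw [Finset.prod_Icc_succ_top (by norm_num : (1:ℕ) ≤ 3),
        Finset.prod_Icc_succ_top (by norm_num : (1:ℕ) ≤ 2),
        Finset.Icc_self, Finset.prod_singleton]
    push_cast
    ring
  rw [hprod]
  have e3a : ((i+2*k+3).choose 3 : ℝ) = ((i:ℝ)+2*k+1)*((i:ℝ)+2*k+2)*((i:ℝ)+2*k+3)/6 := by
    rw [ch3 (i+2*k)]; push_cast; ring
  have e3b : ((i+2*k+6).choose 3 : ℝ) = ((i:ℝ)+2*k+4)*((i:ℝ)+2*k+5)*((i:ℝ)+2*k+6)/6 := by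
    rw [show i+2*k+6 = (i+2*k+3)+3 from by omega, ch3 (i+2*k+3)]; push_cast; ring
  have e2a : ((i+2*k+4).choose 2 : ℝ) = ((i:ℝ)+2*k+3)*((i:ℝ)+2*k+4)/2 := by
    rw [show i+2*k+4 = (i+2*k+2)+2 from by omega, ch2 (i+2*k+2)]; push_cast; ring
  rw [e3a, e3b, e2a]
  have hk1 : ((k:ℝ)+1) ≠ 0 := by positivity
  have hk2 : ((k:ℝ)+2) ≠ 0 := by positivity
  have hk3 : ((k:ℝ)+3) ≠ 0 := by positivity
  have hik1 : ((i:ℝ)+k+1) ≠ 0 := by positivity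
  have hik2 : ((i:ℝ)+k+2) ≠ 0 := by positivity
  have hik3 : ((i:ℝ)+k+3) ≠ 0 := by positivity
  have r1 := step i k
  have r2 := step i (k+1)
  have r3 := step i (k+2)
  rw [show i+2*(k+1)+2 = i+2*k+4 from by omega, show i+2*(k+1) = i+2*k+2 from by omega] at r2
  rw [show i+2*(k+2)+2 = i+2*k+6 from by omega, show i+2*(k+2) = i+2*k+4 from by omega] at r3
  push_cast at r2 r3
  have ha1 : ((i+2*k+2).choose (k+1) : ℝ)
      = ((i+2*k).choose k : ℝ) * (((i:ℝ)+2*k+1) * ((i:ℝ)+2*k+2)) / (((k:ℝ)+1) * ((i:ℝ)+k+1)) := by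
    field_simp
    linarith [r1]
  have ha2 : ((i+2*k+4).choose (k+2) : ℝ)
      = ((i+2*k+2).choose (k+1) : ℝ) * (((i:ℝ)+2*k+3) * ((i:ℝ)+2*k+4)) / (((k:ℝ)+2) * ((i:ℝ)+k+2)) := by
    field_simp
    linarith [r2]
  have ha3 : ((i+2*k+6).choose (k+3) : ℝ)
      = ((i+2*k+4).choose (k+2) : ℝ) * (((i:ℝ)+2*k+5) * ((i:ℝ)+2*k+6)) / (((k:ℝ)+3) * ((i:ℝ)+k+3)) := by
    field_simp
    linarith [r3]
  rw [ha3, ha2, ha1]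
  have hz : ∀ j : ℤ, (2:ℝ)^((1:ℤ) - ((i:ℤ) + 2*(k:ℤ)) - j)
      = (2:ℝ)^((1:ℤ) - ((i:ℤ) + 2*(k:ℤ))) / 2^j := fun j => by
    rw [zpow_sub₀ (two_ne_zero)]
  rw [hz 6, hz 4, hz 2]
  have ht : (2:ℝ)^((1:ℤ) - ((i:ℤ) + 2*(k:ℤ))) ≠ 0 := by positivity
  norm_num
  field_simp
  ring
end

section
/- For i ≥ m with n-i even and 0 ≤ (n-i)/2 ≤ 3: c_{n,m,i} = 2^{1-i} C((n+i)/2, i) C(i, (i-m)/2) * ω_{(n-i)/2}(i,m) / Π_{d=1}^{(n-i)/2} (2d+i+m)(2d+i-m), where ω_0(i,m)=1, ω_1(i,m)=m^2, ω_2(i,m)=(m^2-i-4)^2, ω_3(i,m)=m^2 (m^2-3i-16)^2. -/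
open Finset Nat

theorem Nat.choose_add_mul_ascFactorial (r s k l : ℕ) :
    (r + s + k + l).choose (r + k) * (r + 1).ascFactorial k * (s + 1).ascFactorial l =
      (r + s).choose r * (r + s + 1).ascFactorial (k + l) := by
  have hN := choose_mul_factorial_mul_factorial (by omega : r + k ≤ r + s + k + l)
  have hrs := choose_mul_factorial_mul_factorial (le_add_right r s)
  rw [show r + s + k + l - (r + k) = s + l by omega] at hN
  rw [Nat.add_sub_cancel_left] at hrs
  apply Nat.eq_of_mul_eq_mul_right (mul_pos (factorial_pos r) (factorial_pos s))
  calc _ = (r + s + k + l).choose (r + k) * (r ! * (r + 1).ascFactorial k) *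
        (s ! * (s + 1).ascFactorial l) := by ring
    _ = (r + s) ! * (r + s + 1).ascFactorial (k + l) := by
      rw [factorial_mul_ascFactorial, factorial_mul_ascFactorial, factorial_mul_ascFactorial, hN,
        add_assoc (r + s)]
    _ = _ := by rw [← hrs]; ring

theorem Nat.choose_mul_choose_mul_ascFactorial (i t u : ℕ) :
    (i + 2 * t + u).choose u * (i + 2 * t).choose t * (i + 1).ascFactorial t =
      (i + t + u).choose (t + u) * (t + u).choose t * (i + t + u + 1).ascFactorial t := by
  have h₁ := add_choose_mul_factorial_mul_factorial (i + 2 * t) u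
  have h₂ := add_choose_mul_factorial_mul_factorial (i + t) t
  have h₃ := add_choose_mul_factorial_mul_factorial i (t + u)
  have h₄ := add_choose_mul_factorial_mul_factorial u t
  rw [show i + t + t = i + 2 * t by ring] at h₂
  rw [add_comm u t] at h₄
  rw [← add_assoc] at h₃
  apply Nat.eq_of_mul_eq_mul_right
    (mul_pos (mul_pos (factorial_pos u) (factorial_pos t)) (factorial_pos i))
  calc _ = (i + 2 * t + u).choose u * ((i + 2 * t).choose t * (i ! * (i + 1).ascFactorial t) *
        t !) * u ! := by ring
    _ = (i + t + u) ! * (i + t + u + 1).ascFactorial t := by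
      rw [factorial_mul_ascFactorial, h₂, h₁, factorial_mul_ascFactorial,
        show i + t + u + t = i + 2 * t + u by ring]
    _ = _ := by rw [← h₃, ← h₄]; ring

theorem Nat.choose_mul_choose_mul_choose_mul_ascFactorial (m a t u : ℕ) :
    (m + 2 * a + 2 * t + u).choose u * (m + 2 * a + 2 * t).choose t *
        (m + 2 * a + 2 * t).choose (a + t) *
          ((a + 1).ascFactorial t * (m + a + 1).ascFactorial t) =
      (m + 2 * a + t + u).choose (t + u) * (t + u).choose t * (m + 2 * a).choose a *
        ((m + 2 * a + t + u + 1).ascFactorial t * (m + 2 * a + t + 1).ascFactorial t) := by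
  have h₁ := choose_add_mul_ascFactorial a (m + a) t t
  rw [← ascFactorial_mul_ascFactorial, show a + (m + a) = m + 2 * a by ring,
    show m + 2 * a + t + t = m + 2 * a + 2 * t by ring] at h₁
  have h₂ := choose_mul_choose_mul_ascFactorial (m + 2 * a) t u
  calc _ = (m + 2 * a + 2 * t + u).choose u * (m + 2 * a + 2 * t).choose t *
        ((m + 2 * a + 2 * t).choose (a + t) * (a + 1).ascFactorial t *
          (m + a + 1).ascFactorial t) := by ring
    _ = ((m + 2 * a + 2 * t + u).choose u * (m + 2 * a + 2 * t).choose t *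
          (m + 2 * a + 1).ascFactorial t) *
        ((m + 2 * a).choose a * (m + 2 * a + 1 + t).ascFactorial t) := by rw [h₁]; ring
    _ = _ := by rw [h₂, add_right_comm _ 1 t]; ring

theorem choose_mul_choose_mul_choose_eq_ascPochhammer (m a e t : ℕ) (ht : t ≤ e) :
    ((m + 2 * a + e + t).choose (e - t) : ℝ) * (m + 2 * a + 2 * t).choose t *
        (m + 2 * a + 2 * t).choose (a + t) =
      (m + 2 * a + e).choose e * e.choose t * (m + 2 * a).choose a *
        ((ascPochhammer ℝ t).eval ((m : ℝ) + 2 * a + e + 1) *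
          (ascPochhammer ℝ t).eval ((m : ℝ) + 2 * a + t + 1)) /
        ((ascPochhammer ℝ t).eval ((a : ℝ) + 1) *
          (ascPochhammer ℝ t).eval ((m : ℝ) + a + 1)) := by
  obtain ⟨u, rfl⟩ := Nat.exists_eq_add_of_le ht
  have hpos (x : ℝ) (hx : 0 < x) : (ascPochhammer ℝ t).eval x ≠ 0 :=
    (ascPochhammer_pos t x hx).ne'
  rw [eq_div_iff (mul_ne_zero (hpos _ (by positivity)) (hpos _ (by positivity)))]
  have := congrArg (Nat.cast : ℕ → ℝ) (choose_mul_choose_mul_choose_mul_ascFactorial m a t u)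
  push_cast [Nat.cast_ascFactorial] at this
  rw [show m + 2 * a + (t + u) + t = m + 2 * a + 2 * t + u by ring, Nat.add_sub_cancel_left,
    ← add_assoc, Nat.cast_add, ← add_assoc]
  exact this

theorem c_eq_sum_range (m a e : ℕ) :
    c (m + 2 * a + 2 * e) m (m + 2 * a) =
      ∑ t ∈ range (e + 1), (-1 : ℝ) ^ (e + t) * (2 : ℝ) ^ ((1 : ℤ) - (m + 2 * a : ℕ)) / 4 ^ t *
        (((m + 2 * a + e + t).choose (e - t) : ℝ) * (m + 2 * a + 2 * t).choose t *
          (m + 2 * a + 2 * t).choose (a + t)) := by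
  rw [c, show (m + 2 * a + 2 * e - m) / 2 = a + e by omega,
    show (m + 2 * a - m) / 2 = a by omega,
    show (m + 2 * a + 2 * e + m) / 2 = m + a + e by omega, ← Ico_add_one_right_eq_Icc,
    sum_Ico_eq_sum_range, show a + e + 1 - a = e + 1 by omega, mul_sum]
  refine sum_congr rfl fun t ht => ?_
  have ht : t ≤ e := mem_range_succ_iff.mp ht
  have hsign : (-1 : ℝ) ^ (a + e) * (-1) ^ (a + t) = (-1) ^ (e + t) := by
    rw [← pow_add, show a + e + (a + t) = 2 * a + (e + t) by ring, pow_add, pow_mul, neg_one_sq,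
      one_pow, one_mul]
  have hpow :
      (2 : ℝ) ^ ((1 : ℤ) - m - 2 * (a + t : ℕ)) = 2 ^ ((1 : ℤ) - (m + 2 * a : ℕ)) / 4 ^ t := by
    rw [show (1 : ℤ) - m - 2 * (a + t : ℕ) = 1 - (m + 2 * a : ℕ) - (2 * t : ℕ) by push_cast; ring,
      zpow_sub₀ two_ne_zero, zpow_natCast, pow_mul]
    norm_num
  rw [show m + a + e + (a + t) = m + 2 * a + e + t by ring, show a + e - (a + t) = e - t by omega,
    show m + 2 * (a + t) = m + 2 * a + 2 * t by ring,
    show (m + 2 * a + 2 * t - (m + 2 * a)) / 2 = t by omega, hpow, ← hsign]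
  ring

theorem c_eq_mul_sum (m a e : ℕ) :
    c (m + 2 * a + 2 * e) m (m + 2 * a) =
      (2 : ℝ) ^ ((1 : ℤ) - (m + 2 * a : ℕ)) * (m + 2 * a + e).choose e * (m + 2 * a).choose a *
        ∑ t ∈ range (e + 1), (-1) ^ (e + t) * (e.choose t : ℝ) *
          ((ascPochhammer ℝ t).eval ((m : ℝ) + 2 * a + e + 1) *
            (ascPochhammer ℝ t).eval ((m : ℝ) + 2 * a + t + 1)) /
          (4 ^ t * (ascPochhammer ℝ t).eval ((a : ℝ) + 1) *
            (ascPochhammer ℝ t).eval ((m : ℝ) + a + 1)) := by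
  rw [c_eq_sum_range, mul_sum]
  refine sum_congr rfl fun t ht => ?_
  rw [choose_mul_choose_mul_choose_eq_ascPochhammer m a e t (mem_range_succ_iff.mp ht)]
  ring

theorem prod_Icc_eq_four_pow_mul_ascPochhammer (e : ℕ) (x y : ℝ) :
    ∏ d ∈ Icc 1 e, ((2 * (d : ℝ) + (x + 2 * y) + x) * (2 * d + (x + 2 * y) - x)) =
      4 ^ e * (ascPochhammer ℝ e).eval (y + 1) * (ascPochhammer ℝ e).eval (x + y + 1) := by
  induction e with
  | zero => simp
  | succ e ih =>
    rw [prod_Icc_succ_top (by omega), ih, ascPochhammer_succ_eval, ascPochhammer_succ_eval]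
    push_cast
    ring

def ωHigh : ℕ → ℝ → ℝ → ℝ
  | 0, _, _ => 1
  | 1, _, m => m ^ 2
  | 2, i, m => (m ^ 2 - i - 4) ^ 2
  | _, i, m => m ^ 2 * (m ^ 2 - 3 * i - 16) ^ 2

theorem ωHigh_eq_ite (e : ℕ) (i m : ℝ) :
    ωHigh e i m = if e = 0 then 1 else if e = 1 then m ^ 2 else if e = 2 then (m ^ 2 - i - 4) ^ 2
      else m ^ 2 * (m ^ 2 - 3 * i - 16) ^ 2 := by
  rcases e with _ | _ | _ | e <;> simp [ωHigh]

theorem sum_ascPochhammer_eq_ωHigh {e : ℕ} (he : e ≤ 3) {x y : ℝ} (hx : 0 ≤ x) (hy : 0 ≤ y) :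
    ∑ t ∈ range (e + 1), (-1) ^ (e + t) * (e.choose t : ℝ) *
        ((ascPochhammer ℝ t).eval (x + 2 * y + e + 1) *
          (ascPochhammer ℝ t).eval (x + 2 * y + t + 1)) /
        (4 ^ t * (ascPochhammer ℝ t).eval (y + 1) * (ascPochhammer ℝ t).eval (x + y + 1)) =
      ωHigh e (x + 2 * y) x /
        (4 ^ e * (ascPochhammer ℝ e).eval (y + 1) * (ascPochhammer ℝ e).eval (x + y + 1)) := by
  interval_cases e <;>
    simp only [sum_range_succ, range_one, sum_singleton, Nat.choose, ascPochhammer_succ_eval,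
      ascPochhammer_zero, Polynomial.eval_one, ωHigh] <;>
    push_cast <;>
    field_simp <;> ring

/-- Closed form for i ≥ m and 0 ≤ (n-i)/2 ≤ 3:
c_{n,m,i} = 2^{1-i} C((n+i)/2, i) C(i,(i-m)/2) ω_{(n-i)/2}(i,m) / Π_{d=1}^{(n-i)/2} (2d+i+m)(2d+i-m),
with ω_0 = 1, ω_1(i,m) = m², ω_2(i,m) = (m² - i - 4)², ω_3(i,m) = m²(m² - 3i - 16)². -/
theorem coeff_high_i (n m i : ℕ) (hmi : m ≤ i) (hin : i ≤ n)
    (hpar : Even (n - i)) (hpar' : Even (i - m)) (heps : (n - i) / 2 ≤ 3) :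
    c n m i = (2 : ℝ) ^ ((1 : ℤ) - i) * (((n + i) / 2).choose i : ℝ) *
      (i.choose ((i - m) / 2) : ℝ) *
      (if (n - i) / 2 = 0 then (1 : ℝ)
        else if (n - i) / 2 = 1 then (m : ℝ) ^ 2
        else if (n - i) / 2 = 2 then ((m : ℝ) ^ 2 - i - 4) ^ 2
        else (m : ℝ) ^ 2 * ((m : ℝ) ^ 2 - 3 * i - 16) ^ 2) /
      ∏ d ∈ Finset.Icc 1 ((n - i) / 2), ((2 * (d : ℝ) + i + m) * (2 * (d : ℝ) + i - m)) := by
  obtain ⟨e, he⟩ := hpar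
  obtain ⟨a, ha⟩ := hpar'
  obtain rfl : i = m + 2 * a := by omega
  obtain rfl : n = m + 2 * a + 2 * e := by omega
  rw [show (m + 2 * a + 2 * e - (m + 2 * a)) / 2 = e by omega,
    show (m + 2 * a + 2 * e + (m + 2 * a)) / 2 = m + 2 * a + e by omega,
    show (m + 2 * a - m) / 2 = a by omega, ← ωHigh_eq_ite, choose_symm_add, c_eq_mul_sum,
    sum_ascPochhammer_eq_ωHigh (by omega) (Nat.cast_nonneg m) (Nat.cast_nonneg a)]
  push_cast
  rw [prod_Icc_eq_four_pow_mul_ascPochhammer]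
  ring
end

section
/- Three-term recurrence for i=1: for odd m and odd n ≥ m+4, -((n-m)/2 - 1)((n+m)/2 - 1)((n-3)/2) n c_{n-4,m,1} - (((n+m)/2)((n-m)/2) - n/2)(n-1) c_{n-2,m,1} + ((n+m)/2)((n-m)/2)(n/2 - 1)(n+1) c_{n,m,1} = 0. -/
/-
Put `m = 2a+1` and `n = m + 2j`. Then `c_{n,m,1} = (-1)^j S_j` with `S_j = ∑_s F(j,s)`, where
`F(j,s) = (-1)^s C(2a+1+j+s, 2a+1+2s) W(s)` is hypergeometric in both `j` and `s`. Creative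
telescoping (Zeilberger) finds `G(s) = R(k,s) F(k+2,s)` with `R` rational such that the
recurrence operator applied to `F(·,s)` at `k` equals `G(s+1) - G(s)`. Summing over
`0 ≤ s ≤ k+2` leaves `G(k+3) - G(0)`, and both vanish: `R(k,0) = 0` and `F(k+2,k+3) = 0`.
-/

namespace Nat

variable {R : Type*} [CommRing R]

theorem cast_choose_succ_mul (n r : ℕ) :
    ((n + 1).choose r : R) * ((n : R) + 1 - r) = n.choose r * (n + 1) := by
  rcases le_or_gt r (n + 1) with h | h
  · have key := congrArg (Nat.cast (R := R)) (choose_mul_succ_eq n r)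
    push_cast [h] at key
    linear_combination -key
  · simp [choose_eq_zero_of_lt h, choose_eq_zero_of_lt (show n < r by omega)]

theorem cast_choose_add_two_succ_mul (n r : ℕ) :
    ((n + 2).choose (r + 1) : R) * ((r + 1) * ((n : R) + 1 - r)) =
      n.choose r * ((n + 1) * (n + 2)) := by
  have key := congrArg (Nat.cast (R := R)) (add_one_mul_choose_eq (n + 1) r)
  push_cast at key
  linear_combination (-((n : R) + 1 - r)) * key + ((n : R) + 2) * cast_choose_succ_mul (R := R) n r

theorem cast_choose_succ_add_two_mul (n r : ℕ) :
    ((n + 1).choose (r + 2) : R) * ((r + 1) * (r + 2)) =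
      n.choose r * ((n + 1) * ((n : R) - r)) := by
  rcases le_or_gt r n with h | h
  · have h₁ := congrArg (Nat.cast (R := R)) (add_one_mul_choose_eq n (r + 1))
    have h₂ := congrArg (Nat.cast (R := R)) (choose_succ_right_eq n r)
    push_cast [h] at h₁ h₂
    linear_combination (-((r : R) + 1)) * h₁ + ((n : R) + 1) * h₂
  · simp [choose_eq_zero_of_lt h, choose_eq_zero_of_lt (show n + 1 < r + 2 by omega)]

end Nat

open Finset

noncomputable def cWeight (a s : ℕ) : ℝ :=
  ((2 * a + 1 + 2 * s).choose s : ℝ) * ((2 * a + 1 + 2 * s).choose (a + s) : ℝ) /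
    2 ^ (2 * a + 2 * s)

-- For `s ≤ j` this binomial equals the `C(2a+1+j+s, j-s)` of `c`; unlike that one, it vanishes
-- for `s > j` instead of taking the junk value `C(_, 0) = 1`.
noncomputable def cTerm (a j s : ℕ) : ℝ :=
  (-1) ^ s * ((2 * a + 1 + j + s).choose (2 * a + 1 + 2 * s) : ℝ) * cWeight a s

noncomputable def cSum (a j : ℕ) : ℝ :=
  ∑ s ∈ range (j + 1), cTerm a j s

theorem cWeight_succ (a s : ℕ) :
    cWeight a (s + 1) = cWeight a s * ((2 * a + 2 * s + 2) * (2 * a + 2 * s + 3) ^ 2) /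
      ((s + 1) * (2 * a + s + 2) * (2 * a + 2 * s + 4)) := by
  have h₁ := Nat.cast_choose_add_two_succ_mul (R := ℝ) (2 * a + 1 + 2 * s) s
  have h₂ := Nat.cast_choose_add_two_succ_mul (R := ℝ) (2 * a + 1 + 2 * s) (a + s)
  rw [show 2 * a + 1 + 2 * s + 2 = 2 * a + 1 + 2 * (s + 1) by ring] at h₁ h₂
  rw [show a + s + 1 = a + (s + 1) by ring] at h₂
  simp only [Nat.cast_add, Nat.cast_mul, Nat.cast_ofNat, Nat.cast_one] at h₁ h₂
  rw [show 2 * (a : ℝ) + 1 + 2 * s + 1 - s = 2 * a + s + 2 by ring] at h₁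
  rw [show 2 * (a : ℝ) + 1 + 2 * s + 1 - (a + s) = a + s + 2 by ring] at h₂
  rw [← eq_div_iff (by positivity)] at h₁ h₂
  rw [cWeight, cWeight, h₁, h₂]
  field_simp
  ring

theorem cTerm_eq_zero_of_lt {a j s : ℕ} (h : j < s) : cTerm a j s = 0 := by
  rw [cTerm, Nat.choose_eq_zero_of_lt (by omega)]
  simp

theorem cTerm_eq_cTerm_succ (a j s : ℕ) :
    cTerm a j s = cTerm a (j + 1) s * ((j + 1 - s) / (2 * a + j + s + 2)) := by
  have h := Nat.cast_choose_succ_mul (R := ℝ) (2 * a + 1 + j + s) (2 * a + 1 + 2 * s)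
  rw [show 2 * a + 1 + j + s + 1 = 2 * a + 1 + (j + 1) + s by ring] at h
  rw [cTerm, cTerm, mul_div_assoc', eq_div_iff (by positivity)]
  simp only [Nat.cast_add, Nat.cast_mul, Nat.cast_ofNat, Nat.cast_one] at h ⊢
  linear_combination -(-1) ^ s * cWeight a s * h

theorem cTerm_succ_right (a j s : ℕ) :
    cTerm a j (s + 1) = -cTerm a j s * ((2 * a + j + s + 2) * (j - s) * (2 * a + 2 * s + 3) /
      ((s + 1) * (2 * a + s + 2) * (2 * a + 2 * s + 4))) := by
  have h := Nat.cast_choose_succ_add_two_mul (R := ℝ) (2 * a + 1 + j + s) (2 * a + 1 + 2 * s)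
  rw [show 2 * a + 1 + j + s + 1 = 2 * a + 1 + j + (s + 1) by ring,
    show 2 * a + 1 + 2 * s + 2 = 2 * a + 1 + 2 * (s + 1) by ring] at h
  rw [← eq_div_iff (by positivity)] at h
  rw [cTerm, cTerm, h, cWeight_succ]
  push_cast
  field_simp
  ring

-- Normalised against `cTerm a (k + 2) s`, the only shift of `cTerm` that is nonzero for all
-- `s ≤ k + 2`: the other shifts are multiples of it with positive denominators, so the
-- telescoping identity holds uniformly in `s`, with no boundary cases.
noncomputable def cCertificate (a k s : ℕ) : ℝ :=
  -((2 * a + 2 * k + 3) * (2 * a + 2 * k + 4) * (2 * a + 2 * k + 5)) *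
    (s * (s + a + 1) * (s + 2 * a + 1)) / ((2 * a + k + s + 2) * (2 * a + k + s + 3)) *
    cTerm a (k + 2) s

theorem cTerm_telescoping (a k s : ℕ) :
    -((k + 1) * (2 * a + k + 2) * (a + k + 1) * (2 * a + 2 * k + 5)) * cTerm a k s
      + (2 * (2 * a + k + 3) * (k + 2) - (2 * a + 2 * k + 5)) * (a + k + 2) * cTerm a (k + 1) s
      + (2 * a + k + 3) * (k + 2) * (2 * a + 2 * k + 3) * (a + k + 3) * cTerm a (k + 2) s =
      cCertificate a k (s + 1) - cCertificate a k s := by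
  rw [cTerm_eq_cTerm_succ a k s, cTerm_eq_cTerm_succ a (k + 1) s, cCertificate, cCertificate,
    cTerm_succ_right]
  push_cast
  field_simp
  ring

theorem cSum_eq_sum_range {a j N : ℕ} (h : j < N) : cSum a j = ∑ s ∈ range N, cTerm a j s :=
  sum_subset (range_subset_range.mpr h) fun _ _ hs ↦
    cTerm_eq_zero_of_lt (by simpa using hs)

theorem cSum_recurrence (a k : ℕ) :
    -((k + 1) * (2 * a + k + 2) * (a + k + 1) * (2 * a + 2 * k + 5)) * cSum a k
      + (2 * (2 * a + k + 3) * (k + 2) - (2 * a + 2 * k + 5)) * (a + k + 2) * cSum a (k + 1)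
      + (2 * a + k + 3) * (k + 2) * (2 * a + 2 * k + 3) * (a + k + 3) * cSum a (k + 2) = 0 := by
  rw [cSum_eq_sum_range (N := k + 3) (by omega), cSum_eq_sum_range (N := k + 3) (by omega),
    cSum_eq_sum_range (N := k + 3) (by omega), mul_sum, mul_sum, mul_sum, ← sum_add_distrib,
    ← sum_add_distrib, sum_congr rfl fun s _ ↦ cTerm_telescoping a k s, sum_range_sub,
    cCertificate, cCertificate, cTerm_eq_zero_of_lt (show k + 2 < k + 3 by omega)]
  simp

theorem c_eq_neg_one_pow_mul_cSum (a j : ℕ) :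
    c (2 * a + 1 + 2 * j) (2 * a + 1) 1 = (-1) ^ j * cSum a j := by
  rw [c, cSum, show (2 * a + 1 + 2 * j - (2 * a + 1)) / 2 = j by omega,
    show (1 - (2 * a + 1)) / 2 = 0 by omega, ← Nat.range_succ_eq_Icc_zero]
  congr 1
  refine sum_congr rfl fun s hs ↦ ?_
  have hsj : s ≤ j := Nat.lt_succ_iff.mp (mem_range.mp hs)
  rw [show (2 * a + 1 + 2 * j + (2 * a + 1)) / 2 = 2 * a + 1 + j by omega,
    show (2 * a + 1 + 2 * s - 1) / 2 = a + s by omega,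
    Nat.choose_symm_of_eq_add (show 2 * a + 1 + j + s = (j - s) + (2 * a + 1 + 2 * s) by omega),
    show (1 : ℤ) - ((2 * a + 1 : ℕ) : ℤ) - 2 * s = -((2 * a + 2 * s : ℕ) : ℤ) by push_cast; ring,
    zpow_neg, zpow_natCast, cTerm, cWeight]
  ring

/-- Three-term recurrence for i = 1:
-((n-m)/2 - 1)((n+m)/2 - 1)((n-3)/2) n c_{n-4,m,1}
- (((n+m)/2)((n-m)/2) - n/2)(n-1) c_{n-2,m,1}
+ ((n+m)/2)((n-m)/2)(n/2 - 1)(n+1) c_{n,m,1} = 0. -/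
theorem coeff_three_term_recurrence (n m : ℕ) (hm : Odd m) (hn : Odd n) (hmn : m + 4 ≤ n) :
    -((((n : ℝ) - m) / 2 - 1) * (((n : ℝ) + m) / 2 - 1) * (((n : ℝ) - 3) / 2) * n) *
        c (n - 4) m 1
      - ((((n : ℝ) + m) / 2 * (((n : ℝ) - m) / 2) - (n : ℝ) / 2) * ((n : ℝ) - 1)) *
        c (n - 2) m 1
      + (((n : ℝ) + m) / 2 * (((n : ℝ) - m) / 2) * ((n : ℝ) / 2 - 1) * ((n : ℝ) + 1)) *
        c n m 1 = 0 := by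
  obtain ⟨a, rfl⟩ := hm
  obtain ⟨k, rfl⟩ : ∃ k, n = 2 * a + 1 + 2 * (k + 2) := by
    obtain ⟨b, rfl⟩ := hn
    exact ⟨b - a - 2, by omega⟩
  rw [show 2 * a + 1 + 2 * (k + 2) - 4 = 2 * a + 1 + 2 * k by omega,
    show 2 * a + 1 + 2 * (k + 2) - 2 = 2 * a + 1 + 2 * (k + 1) by omega,
    c_eq_neg_one_pow_mul_cSum, c_eq_neg_one_pow_mul_cSum, c_eq_neg_one_pow_mul_cSum]
  push_cast
  linear_combination (-1) ^ k * cSum_recurrence a k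
end
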